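/- arXiv:2504.11728 — 4 statements merged into one kernel-verified Lean document; each statement's English description precedes it below -/
import Mathlib

section
/- Let M = (U, 𝓘) be a matroid with finite ground set and weight function w : U → ℝ. Let I, O ⊆ U be disjoint subsets, let P* ∈ 𝓑*(I,O) be a minimum basis, and let y ∈ U* \ P* be a relevant element. If I ⊇ Ex^zero_out(P*; y), then no minimum basis in 𝓑*(I,O) contains y. -/
variable {α : Type*}

/-- The total weight of a set of elements. -/
noncomputable def wsum (w : α → ℝ) (S : Set α) : ℝ := ∑ᶠ x ∈ S, w x

/-- `B` is a minimum-weight basis of the matroid `M` w.r.t. the weight function `w`. -/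
def MinBase (M : Matroid α) (w : α → ℝ) (B : Set α) : Prop :=
  M.IsBase B ∧ ∀ B', M.IsBase B' → wsum w B ≤ wsum w B'

/-- `B ∈ 𝓑*(I,O)`: `B` is a minimum basis containing all of `I` and avoiding `O`. -/
def BStar (M : Matroid α) (w : α → ℝ) (I O B : Set α) : Prop :=
  MinBase M w B ∧ I ⊆ B ∧ B ∩ O = ∅

/-- `(x, y)` is an exchange for the basis `B`. -/
def IsExchange (M : Matroid α) (B : Set α) (x y : α) : Prop :=
  x ∈ B ∧ y ∉ B ∧ M.IsBase ((B \ {x}) ∪ {y})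

/-- An element is relevant if it belongs to some minimum basis. -/
def Relevant (M : Matroid α) (w : α → ℝ) (x : α) : Prop :=
  ∃ B, MinBase M w B ∧ x ∈ B

/-- `Ex^zero_out(B; y)`: elements `x ∈ B` such that `(x,y)` is a zero-exchange for `B`. -/
def ExZeroOut (M : Matroid α) (w : α → ℝ) (B : Set α) (y : α) : Set α :=
  {x | x ∈ B ∧ IsExchange M B x y ∧ w y = w x}

lemma wsum_insert (w : α → ℝ) {S : Set α} (hS : S.Finite) {x : α} (hx : x ∉ S) :
    wsum w (insert x S) = w x + wsum w S := by
  unfold wsum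
  exact finsum_mem_insert w hx hS

lemma wsum_eq_of_mem (w : α → ℝ) {S : Set α} (hS : S.Finite) {y : α} (hy : y ∈ S) :
    wsum w S = w y + wsum w (S \ {y}) := by
  have h1 : S = insert y (S \ {y}) := by
    simp [Set.insert_diff_singleton, Set.insert_eq_self.2 hy]
  nth_rewrite 1 [h1]
  exact wsum_insert w hS.diff (by simp)

/-- Symmetric exchange with weights: if `B` and `P` are minimum bases and `y ∈ B \ P`, then
there is `x ∈ P \ B` such that both exchanges are bases and `w x = w y`. -/
lemma exists_zero_exchange (M : Matroid α) (hfin : M.E.Finite) (w : α → ℝ)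
    {B P : Set α} (hB : MinBase M w B) (hP : MinBase M w P)
    {y : α} (hyB : y ∈ B) (hyP : y ∉ P) :
    ∃ x, x ∈ P ∧ x ∉ B ∧ M.IsBase (insert y (P \ {x})) ∧ w y = w x := by
  obtain ⟨hBb, hBmin⟩ := hB
  obtain ⟨hPb, hPmin⟩ := hP
  have hyE : y ∈ M.E := hBb.subset_ground hyB
  have hPfin : P.Finite := hfin.subset hPb.subset_ground
  have hBfin : B.Finite := hfin.subset hBb.subset_ground
  -- find a minimal dependent subset `C` of `insert y P`
  have hdep : ¬ M.Indep (insert y P) := by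
    intro h
    exact hyP (Set.insert_eq_self.1 (hPb.eq_of_subset_indep h (Set.subset_insert _ _)).symm)
  set 𝒮 : Set (Set α) := {C | C ⊆ insert y P ∧ ¬ M.Indep C} with h𝒮
  have h𝒮fin : 𝒮.Finite := ((hPfin.insert y).finite_subsets).subset (fun C hC => hC.1)
  have h𝒮ne : 𝒮.Nonempty := ⟨insert y P, Set.Subset.rfl, hdep⟩
  obtain ⟨C, hC𝒮, hCmin⟩ := Set.Finite.exists_minimalFor Set.ncard 𝒮 h𝒮fin h𝒮ne
  obtain ⟨hCsub, hCdep⟩ := hC𝒮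
  have hCfin : C.Finite := (hPfin.insert y).subset hCsub
  have hmin : ∀ x ∈ C, M.Indep (C \ {x}) := by
    intro x hx
    by_contra hcon
    have hlt : (C \ {x}).ncard < C.ncard :=
      Set.ncard_lt_ncard (Set.sdiff_singleton_ssubset.2 hx) hCfin
    have := hCmin (j := C \ {x}) ⟨(Set.diff_subset).trans hCsub, hcon⟩ hlt.le
    omega
  have hyC : y ∈ C := by
    by_contra hyC
    exact hCdep (hPb.indep.subset (fun z hz => by
      rcases hCsub hz with rfl | h
      · exact absurd hz hyC
      · exact h))
  have hCsubE : C ⊆ M.E := hCsub.trans (Set.insert_subset hyE hPb.subset_ground)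
  -- key closure fact: every element of a minimal dependent set is in the closure of the rest
  have hcl : ∀ x ∈ C, x ∈ M.closure (C \ {x}) := by
    intro x hx
    have hind := hmin x hx
    have hins : insert x (C \ {x}) = C := by
      simp [Set.insert_diff_singleton, Set.insert_eq_self.2 hx]
    by_contra hcon
    refine hCdep ?_
    rw [← hins]
    rw [hind.insert_indep_iff_of_notMem (by simp)]
    exact ⟨hCsubE hx, hcon⟩
  -- y is not in the closure of B \ {y}
  have hyBcl : y ∉ M.closure (B \ {y}) := hBb.indep.notMem_closure_diff_of_mem hyB
  -- find x ∈ C \ {y} outside the closure of B \ {y}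
  have hex : ∃ x ∈ C, x ≠ y ∧ x ∉ M.closure (B \ {y}) := by
    by_contra hcon
    push_neg at hcon
    have hsub' : C \ {y} ⊆ M.closure (B \ {y}) := by
      rintro z ⟨hz, hzy⟩
      exact hcon z hz (by simpa using hzy)
    have : y ∈ M.closure (M.closure (B \ {y})) :=
      M.closure_subset_closure hsub' (hcl y hyC)
    rw [M.closure_closure] at this
    exact hyBcl this
  obtain ⟨x, hxC, hxy, hxcl⟩ := hex
  have hxP : x ∈ P := by
    rcases hCsub hxC with rfl | h
    · exact absurd rfl hxy
    · exact h
  have hxB : x ∉ B := by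
    intro hxB
    exact hxcl (M.subset_closure (B \ {y})
      ((Set.diff_subset).trans hBb.subset_ground) ⟨hxB, hxy⟩)
  have hxE : x ∈ M.E := hCsubE hxC
  -- `insert x (B \ {y})` is a base
  have hindB : M.Indep (insert x (B \ {y})) := by
    rw [(hBb.indep.diff {y}).insert_indep_iff_of_notMem (fun h => hxB h.1)]
    exact ⟨hxE, hxcl⟩
  have hbaseB : M.IsBase (insert x (B \ {y})) := hBb.exchange_isBase_of_indep hxB hindB
  -- `insert y (P \ {x})` is a base
  have hindP : M.Indep (insert y (P \ {x})) := by
    rw [(hPb.indep.diff {x}).insert_indep_iff_of_notMem (fun h => hyP h.1)]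
    refine ⟨hyE, fun hycl => ?_⟩
    have hsub2 : C \ {x} ⊆ insert y (P \ {x}) := by
      rintro z ⟨hz, hzx⟩
      rcases hCsub hz with rfl | h
      · exact Set.mem_insert _ _
      · exact Set.mem_insert_of_mem _ ⟨h, hzx⟩
    have hx2 : x ∈ M.closure (insert y (P \ {x})) :=
      M.closure_subset_closure hsub2 (hcl x hxC)
    rw [M.closure_insert_eq_of_mem_closure hycl] at hx2
    exact hPb.indep.notMem_closure_diff_of_mem hxP hx2
  have hbaseP : M.IsBase (insert y (P \ {x})) := hPb.exchange_isBase_of_indep hyP hindP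
  -- weight comparison
  have hBeq : wsum w B = w y + wsum w (B \ {y}) := wsum_eq_of_mem w hBfin hyB
  have hPeq : wsum w P = w x + wsum w (P \ {x}) := wsum_eq_of_mem w hPfin hxP
  have hB' : wsum w (insert x (B \ {y})) = w x + wsum w (B \ {y}) :=
    wsum_insert w hBfin.diff (fun h => hxB h.1)
  have hP' : wsum w (insert y (P \ {x})) = w y + wsum w (P \ {x}) :=
    wsum_insert w hPfin.diff (fun h => hyP h.1)
  have h1 := hBmin _ hbaseB
  have h2 := hPmin _ hbaseP
  rw [hB', hBeq] at h1
  rw [hP', hPeq] at h2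
  exact ⟨x, hxP, hxB, hbaseP, le_antisymm (by linarith) (by linarith)⟩

/-- If `P* ∈ 𝓑*(I,O)`, `y ∈ U* \ P*` is relevant, and `I ⊇ Ex^zero_out(P*; y)`, then no
minimum basis in `𝓑*(I,O)` contains `y`. -/
theorem stmt_1 (M : Matroid α) (hfin : M.E.Finite) (w : α → ℝ)
    (I O : Set α) (hIO : Disjoint I O)
    (P : Set α) (hP : BStar M w I O P)
    (y : α) (hyrel : Relevant M w y) (hyP : y ∉ P)
    (hsub : ExZeroOut M w P y ⊆ I) :
    ∀ B, BStar M w I O B → y ∉ B := by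
  rintro B ⟨hBmin, hIB, hBO⟩ hyB
  obtain ⟨x, hxP, hxB, hbase, heq⟩ :=
    exists_zero_exchange M hfin w hBmin hP.1 hyB hyP
  have hx : x ∈ ExZeroOut M w P y := by
    refine ⟨hxP, ⟨hxP, hyP, ?_⟩, heq⟩
    rwa [Set.union_singleton]
  exact hxB (hIB (hsub hx))
end

section
/- Let G be a finite connected undirected graph with nonnegative edge weights and let 𝒳 = {X_1,…,X_k} be a partition of V(G). For every pair (i,j) ∈ Λ(𝒳), every minimum x_i,x_j-cut of G/𝒳 is a relevant cut of G. -/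
variable {V : Type*} [Fintype V] [DecidableEq V]

/-- `E(W;G)`: the set of edges of `G` with exactly one endpoint in `W`. -/
def cutEdges (G : SimpleGraph V) (W : Set V) : Set (Sym2 V) :=
  {e | e ∈ G.edgeSet ∧ ∃ u v, e = s(u, v) ∧ u ∈ W ∧ v ∉ W}

/-- The weight of an edge set. -/
noncomputable def cutWeight (w : Sym2 V → ℝ) (C : Set (Sym2 V)) : ℝ := ∑ᶠ e ∈ C, w e

/-- `C` is a cut of `G`: `C = E(W;G)` for some nonempty proper `W ⊆ V`. -/
def IsCut (G : SimpleGraph V) (C : Set (Sym2 V)) : Prop :=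
  ∃ W : Set V, W.Nonempty ∧ W ≠ Set.univ ∧ C = cutEdges G W

/-- `C` is an `s,t`-cut of `G`. -/
def IsSTCut (G : SimpleGraph V) (C : Set (Sym2 V)) (s t : V) : Prop :=
  ∃ W : Set V, s ∈ W ∧ t ∉ W ∧ C = cutEdges G W

/-- `C` is a minimum-weight `s,t`-cut of `G`. -/
def IsMinSTCut (G : SimpleGraph V) (w : Sym2 V → ℝ) (C : Set (Sym2 V)) (s t : V) : Prop :=
  IsSTCut G C s t ∧ ∀ C', IsSTCut G C' s t → cutWeight w C ≤ cutWeight w C'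

/-- `C` is a relevant cut of `G`: a minimum `s,t`-cut for some pair of distinct vertices. -/
def RelCut (G : SimpleGraph V) (w : Sym2 V → ℝ) (C : Set (Sym2 V)) : Prop :=
  ∃ s t : V, s ≠ t ∧ IsMinSTCut G w C s t

/-- `λ(s,t;G)`: the minimum weight of an `s,t`-cut of `G`. -/
noncomputable def lamST (G : SimpleGraph V) (w : Sym2 V → ℝ) (s t : V) : ℝ :=
  sInf (cutWeight w '' {C | IsSTCut G C s t})

/-- `X` is a partition of the vertex set into nonempty blocks. -/
def IsPartition (X : Set (Set V)) : Prop :=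
  (∀ A ∈ X, A.Nonempty) ∧ X.PairwiseDisjoint id ∧ ⋃₀ X = Set.univ

/-- A cut of the contraction `G/X`, identified with the cut `E(⋃₀ S; G)` of `G` where `S`
is a nonempty proper subfamily of blocks of `X`. -/
def IsPartCut (G : SimpleGraph V) (X : Set (Set V)) (C : Set (Sym2 V)) : Prop :=
  ∃ S : Set (Set V), S ⊆ X ∧ S.Nonempty ∧ S ≠ X ∧ C = cutEdges G (⋃₀ S)

/-- An `x_A,x_B`-cut of the contraction `G/X` (for blocks `A, B` of `X`). -/
def IsPartSTCut (G : SimpleGraph V) (X : Set (Set V)) (C : Set (Sym2 V))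
    (A B : Set V) : Prop :=
  ∃ S : Set (Set V), S ⊆ X ∧ A ∈ S ∧ B ∉ S ∧ C = cutEdges G (⋃₀ S)

/-- `λ(x_A, x_B; G/X)`: the minimum weight of an `x_A,x_B`-cut of `G/X`. -/
noncomputable def lamPart (G : SimpleGraph V) (w : Sym2 V → ℝ) (X : Set (Set V))
    (A B : Set V) : ℝ :=
  sInf (cutWeight w '' {C | IsPartSTCut G X C A B})

/-- `C` is a minimum `x_A,x_B`-cut of `G/X`. -/
def IsMinPartSTCut (G : SimpleGraph V) (w : Sym2 V → ℝ) (X : Set (Set V))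
    (C : Set (Sym2 V)) (A B : Set V) : Prop :=
  IsPartSTCut G X C A B ∧ ∀ C', IsPartSTCut G X C' A B → cutWeight w C ≤ cutWeight w C'

/-- `λ_max(A,B;G) = max {λ(a,b;G) : a ∈ A, b ∈ B}`. -/
noncomputable def lamMax (G : SimpleGraph V) (w : Sym2 V → ℝ) (A B : Set V) : ℝ :=
  sSup {x : ℝ | ∃ a ∈ A, ∃ b ∈ B, lamST G w a b = x}

/-- `(A,B)` is a pair of distinct blocks of `X` belonging to `Λ(X)`, i.e. with
`λ(x_A,x_B;G/X) = λ_max(A,B;G)`. -/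
def LambdaPair (G : SimpleGraph V) (w : Sym2 V → ℝ) (X : Set (Set V))
    (A B : Set V) : Prop :=
  A ∈ X ∧ B ∈ X ∧ A ≠ B ∧ lamPart G w X A B = lamMax G w A B

/-- `C` is a relevant cut of the contraction `G/X`: a minimum `x_A,x_B`-cut of `G/X` for
some pair of distinct blocks `A, B` of `X`. -/
def RelPartCut (G : SimpleGraph V) (w : Sym2 V → ℝ) (X : Set (Set V))
    (C : Set (Sym2 V)) : Prop :=
  ∃ A B : Set V, A ∈ X ∧ B ∈ X ∧ A ≠ B ∧ IsMinPartSTCut G w X C A B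

lemma cutWeight_nonneg' (G : SimpleGraph V) (w : Sym2 V → ℝ)
    (hw : ∀ e ∈ G.edgeSet, 0 ≤ w e) (W : Set V) :
    0 ≤ cutWeight w (cutEdges G W) := by
  classical
  unfold cutWeight
  rw [← (Set.toFinite (cutEdges G W)).coe_toFinset, finsum_mem_coe_finset]
  exact Finset.sum_nonneg fun e he =>
    hw e ((Set.Finite.mem_toFinset _).mp he).1

lemma stcut_weights_bddBelow (G : SimpleGraph V) (w : Sym2 V → ℝ)
    (hw : ∀ e ∈ G.edgeSet, 0 ≤ w e) (s t : V) :
    ∀ x ∈ cutWeight w '' {C | IsSTCut G C s t}, (0:ℝ) ≤ x := by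
  rintro x ⟨C, ⟨W, _, _, rfl⟩, rfl⟩
  exact cutWeight_nonneg' G w hw W

/-- For every pair `(A,B) ∈ Λ(X)`, every minimum `x_A,x_B`-cut of the contraction `G/X`
is a relevant cut of `G`. -/
theorem stmt_9 (G : SimpleGraph V) (hconn : G.Connected)
    (w : Sym2 V → ℝ) (hw : ∀ e ∈ G.edgeSet, 0 ≤ w e)
    (X : Set (Set V)) (hX : IsPartition X)
    (A B : Set V) (hAB : LambdaPair G w X A B) :
    ∀ C : Set (Sym2 V), IsMinPartSTCut G w X C A B → RelCut G w C := by
  obtain ⟨hA, hB, hABne, hlam⟩ := hAB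
  obtain ⟨hne, hdisj, -⟩ := hX
  intro C hC
  obtain ⟨⟨S, hSX, hAS, hBS, hCeq⟩, hCmin⟩ := hC
  -- the set of λ values
  set T : Set ℝ := {x : ℝ | ∃ a ∈ A, ∃ b ∈ B, lamST G w a b = x} with hT
  have hTeq : T = (fun p : V × V => lamST G w p.1 p.2) '' (A ×ˢ B) := by
    ext x
    constructor
    · rintro ⟨a, ha, b, hb, rfl⟩; exact ⟨(a, b), ⟨ha, hb⟩, rfl⟩
    · rintro ⟨⟨a, b⟩, ⟨ha, hb⟩, rfl⟩; exact ⟨a, ha, b, hb, rfl⟩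
  have hTfin : T.Finite := by rw [hTeq]; exact (Set.toFinite _).image _
  obtain ⟨a, haA⟩ := hne A hA
  obtain ⟨b, hbB⟩ := hne B hB
  have hTne : T.Nonempty := ⟨lamST G w a b, a, haA, b, hbB, rfl⟩
  -- the sup is attained
  obtain ⟨a0, ha0, b0, hb0, hab0⟩ := hTne.csSup_mem hTfin
  -- C = cutEdges G (⋃₀ S) is an a0,b0-cut
  have ha0W : a0 ∈ ⋃₀ S := ⟨A, hAS, ha0⟩
  have hb0W : b0 ∉ ⋃₀ S := by
    rintro ⟨T', hT'S, hb0T'⟩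
    have hT'B : T' ≠ B := fun h => hBS (h ▸ hT'S)
    exact (hdisj (hSX hT'S) hB hT'B).le_bot ⟨hb0T', hb0⟩
  have hSTcut : IsSTCut G C a0 b0 := ⟨⋃₀ S, ha0W, hb0W, hCeq⟩
  have hne00 : a0 ≠ b0 := by
    rintro rfl
    exact (hdisj hA hB hABne).le_bot ⟨ha0, hb0⟩
  -- weight of C equals lamPart
  have hwC : cutWeight w C = lamPart G w X A B := by
    refine (IsLeast.csInf_eq ?_).symm
    constructor
    · exact ⟨C, ⟨S, hSX, hAS, hBS, hCeq⟩, rfl⟩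
    · rintro x ⟨C', hC', rfl⟩
      exact hCmin C' hC'
  -- lamST a0 b0 = lamMax = lamPart = weight of C
  have hlamST : lamST G w a0 b0 = cutWeight w C := by
    rw [hwC, hlam]
    exact hab0
  refine ⟨a0, b0, hne00, hSTcut, ?_⟩
  intro C' hC'
  rw [← hlamST]
  refine csInf_le ⟨0, fun x hx => stcut_weights_bddBelow G w hw a0 b0 x hx⟩ ?_
  exact ⟨C', hC', rfl⟩
end

section
/- Let G be a finite connected undirected graph with nonnegative edge weights and let 𝒳 = {X_1,…,X_k} be a partition of V(G) with Λ(𝒳) ≠ ∅. Let (i,j) ∈ Λ(𝒳) be a pair maximizing λ(x_i,x_j;G/𝒳) over all pairs in Λ(𝒳). Then the set of cuts that are relevant both for G and for G/𝒳 is contained in the disjoint union of: the set of minimum x_i,x_j-cuts of G/𝒳, and the set of relevant cuts of (G/𝒳)/{x_i,x_j} (the contraction corresponding to the partition obtained from 𝒳 by merging X_i and X_j). -/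
variable {V : Type*} [Fintype V] [DecidableEq V]

set_option linter.unusedSectionVars false

/-! Auxiliary lemmas -/

lemma mem_cutEdges_iff' {G : SimpleGraph V} {u v : V} (h : G.Adj u v) (W : Set V) :
    s(u, v) ∈ cutEdges G W ↔ ¬ (u ∈ W ↔ v ∈ W) := by
  constructor
  · rintro ⟨-, p, q, hpq, hp, hq⟩
    rcases Sym2.eq_iff.mp hpq with ⟨rfl, rfl⟩ | ⟨rfl, rfl⟩ <;> tauto
  · intro hne
    by_cases hu : u ∈ W
    · exact ⟨G.mem_edgeSet.mpr h, u, v, rfl, hu, by tauto⟩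
    · exact ⟨G.mem_edgeSet.mpr h, v, u, Sym2.eq_swap, by tauto, hu⟩

lemma cutEdges_compl (G : SimpleGraph V) (W : Set V) : cutEdges G Wᶜ = cutEdges G W := by
  ext e
  constructor
  · rintro ⟨he, p, q, rfl, hp, hq⟩
    exact ⟨he, q, p, Sym2.eq_swap, by simpa using hq, by simpa using hp⟩
  · rintro ⟨he, p, q, rfl, hp, hq⟩
    exact ⟨he, q, p, Sym2.eq_swap, by simpa using hq, by simpa using hp⟩

lemma cut_parity {G : SimpleGraph V} {W U : Set V}
    (h : cutEdges G W = cutEdges G U) {u v : V} (hr : G.Reachable u v) :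
    ((u ∈ W) ↔ (v ∈ W)) ↔ ((u ∈ U) ↔ (v ∈ U)) := by
  obtain ⟨p⟩ := hr
  induction p with
  | nil => tauto
  | @cons a b c hadj p ih =>
      have h1 := mem_cutEdges_iff' hadj W
      have h2 := mem_cutEdges_iff' hadj U
      have h3 : (s(a, b) ∈ cutEdges G W) ↔ (s(a, b) ∈ cutEdges G U) := by rw [h]
      tauto

lemma block_eq' {X : Set (Set V)} (hX : IsPartition X) {A B : Set V} (hA : A ∈ X)
    (hB : B ∈ X) {x : V} (hxA : x ∈ A) (hxB : x ∈ B) : A = B := by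
  by_contra hne
  exact Set.disjoint_left.mp (hX.2.1 hA hB hne) hxA hxB

lemma exists_block' {X : Set (Set V)} (hX : IsPartition X) (x : V) : ∃ A ∈ X, x ∈ A := by
  have : x ∈ ⋃₀ X := hX.2.2 ▸ Set.mem_univ x
  exact this

lemma not_mem_sUnion_of_disjoint {Y S : Set (Set V)}
    (hdisj : ∀ R ∈ Y, ∀ Q ∈ Y, R ≠ Q → Disjoint R Q) (hS : S ⊆ Y) {B : Set V}
    (hB : B ∈ Y) (hBS : B ∉ S) {x : V} (hx : x ∈ B) : x ∉ ⋃₀ S := by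
  rintro ⟨R, hR, hxR⟩
  have hne : R ≠ B := fun h => hBS (h ▸ hR)
  exact Set.disjoint_left.mp (hdisj R (hS hR) B hB hne) hxR hx

lemma sUnion_diff' {X : Set (Set V)} (hX : IsPartition X) {S : Set (Set V)} (hS : S ⊆ X) :
    ⋃₀ (X \ S) = (⋃₀ S)ᶜ := by
  have hdisj : ∀ R ∈ X, ∀ Q ∈ X, R ≠ Q → Disjoint R Q := fun R hR Q hQ h => hX.2.1 hR hQ h
  ext x
  constructor
  · rintro ⟨R, ⟨hRX, hRS⟩, hxR⟩
    exact not_mem_sUnion_of_disjoint hdisj hS hRX hRS hxR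
  · intro hx
    obtain ⟨A, hA, hxA⟩ := exists_block' hX x
    exact ⟨A, ⟨hA, fun hAS => hx ⟨A, hAS, hxA⟩⟩, hxA⟩

lemma cutWeight_cut_nonneg {G : SimpleGraph V} {w : Sym2 V → ℝ}
    (hw : ∀ e ∈ G.edgeSet, 0 ≤ w e) (W : Set V) : 0 ≤ cutWeight w (cutEdges G W) := by
  rw [cutWeight, finsum_mem_def]
  exact finsum_nonneg (Set.indicator_nonneg (fun e he => hw e he.1))

lemma bddBelow_st {G : SimpleGraph V} {w : Sym2 V → ℝ}
    (hw : ∀ e ∈ G.edgeSet, 0 ≤ w e) (s t : V) :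
    BddBelow (cutWeight w '' {C | IsSTCut G C s t}) := by
  refine ⟨0, ?_⟩
  rintro x ⟨C, ⟨W, -, -, rfl⟩, rfl⟩
  exact cutWeight_cut_nonneg hw W

lemma bddBelow_part {G : SimpleGraph V} {w : Sym2 V → ℝ}
    (hw : ∀ e ∈ G.edgeSet, 0 ≤ w e) (X : Set (Set V)) (A B : Set V) :
    BddBelow (cutWeight w '' {C | IsPartSTCut G X C A B}) := by
  refine ⟨0, ?_⟩
  rintro x ⟨C, ⟨S, -, -, -, rfl⟩, rfl⟩
  exact cutWeight_cut_nonneg hw _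

lemma isSTCut_symm {G : SimpleGraph V} {C : Set (Sym2 V)} {s t : V}
    (h : IsSTCut G C s t) : IsSTCut G C t s := by
  obtain ⟨W, hs, ht, rfl⟩ := h
  exact ⟨Wᶜ, ht, by simpa using hs, (cutEdges_compl G W).symm⟩

lemma isMinSTCut_symm {G : SimpleGraph V} {w : Sym2 V → ℝ} {C : Set (Sym2 V)} {s t : V}
    (h : IsMinSTCut G w C s t) : IsMinSTCut G w C t s :=
  ⟨isSTCut_symm h.1, fun C' hC' => h.2 C' (isSTCut_symm hC')⟩

lemma union_not_mem' {X : Set (Set V)} (hX : IsPartition X) {A B : Set V} (hA : A ∈ X)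
    (hB : B ∈ X) (hne : A ≠ B) : A ∪ B ∉ X := by
  intro h
  obtain ⟨x, hx⟩ := hX.1 A hA
  have hAeq : A = A ∪ B := block_eq' hX hA h hx (Or.inl hx)
  obtain ⟨y, hy⟩ := hX.1 B hB
  have hyA : y ∈ A := hAeq ▸ Or.inr hy
  exact hne (block_eq' hX hA hB hyA hy)

lemma merge_disjoint {X : Set (Set V)} (hX : IsPartition X) {A B : Set V} (hA : A ∈ X)
    (hB : B ∈ X) :
    ∀ R ∈ insert (A ∪ B) (X \ {A, B}), ∀ Q ∈ insert (A ∪ B) (X \ {A, B}),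
      R ≠ Q → Disjoint R Q := by
  have key : ∀ Q ∈ X \ {A, B}, Disjoint (A ∪ B) Q := by
    rintro Q ⟨hQX, hQ⟩
    simp only [Set.mem_insert_iff, not_or] at hQ
    exact Set.disjoint_union_left.mpr
      ⟨hX.2.1 hA hQX (fun h => hQ.1 h.symm), hX.2.1 hB hQX (fun h => hQ.2 h.symm)⟩
  rintro R (rfl | hR) Q (rfl | hQ) hne
  · exact absurd rfl hne
  · exact key Q hQ
  · exact (key R hR).symm
  · exact hX.2.1 hR.1 hQ.1 hne

set_option linter.unusedSectionVars false

lemma right_case {G : SimpleGraph V} {w : Sym2 V → ℝ} {X : Set (Set V)}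
    (hX : IsPartition X) {A B : Set V} (hA : A ∈ X) (hB : B ∈ X)
    {C : Set (Sym2 V)} {s t : V} (hmin : IsMinSTCut G w C s t)
    {S' : Set (Set V)} (hS' : S' ⊆ insert (A ∪ B) (X \ {A, B}))
    (hC : C = cutEdges G (⋃₀ S')) {P' Q' : Set V}
    (hP'X : P' ∈ insert (A ∪ B) (X \ {A, B})) (hQ'X : Q' ∈ insert (A ∪ B) (X \ {A, B}))
    (hP'S' : P' ∈ S') (hQ'S' : Q' ∉ S') (hsP' : s ∈ P') (htQ' : t ∈ Q') :
    RelPartCut G w (insert (A ∪ B) (X \ {A, B})) C := by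
  have hdisj := merge_disjoint hX hA hB
  have hne : P' ≠ Q' := fun h => hQ'S' (h ▸ hP'S')
  refine ⟨P', Q', hP'X, hQ'X, hne, ⟨S', hS', hP'S', hQ'S', hC⟩, ?_⟩
  rintro C' ⟨T, hT, hPT, hQT, rfl⟩
  exact hmin.2 _ ⟨⋃₀ T, ⟨P', hPT, hsP'⟩,
    not_mem_sUnion_of_disjoint hdisj hT hQ'X hQT htQ', rfl⟩

lemma aux_core (G : SimpleGraph V)
    (w : Sym2 V → ℝ) (hw : ∀ e ∈ G.edgeSet, 0 ≤ w e)
    (X : Set (Set V)) (hX : IsPartition X)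
    (A B : Set V) (hAB : LambdaPair G w X A B)
    (hmax : ∀ A' B' : Set V, LambdaPair G w X A' B' →
      lamPart G w X A' B' ≤ lamPart G w X A B)
    (C : Set (Sym2 V)) (s t : V)
    (hmin : IsMinSTCut G w C s t)
    (S : Set (Set V)) (hSX : S ⊆ X) (hC : C = cutEdges G (⋃₀ S))
    (hs : s ∈ ⋃₀ S) (ht : t ∉ ⋃₀ S) :
    IsMinPartSTCut G w X C A B ∨ RelPartCut G w (insert (A ∪ B) (X \ {A, B})) C := by
  obtain ⟨hAX, hBX, hABne, -⟩ := hAB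
  have hdisjX : ∀ R ∈ X, ∀ Q ∈ X, R ≠ Q → Disjoint R Q := fun R hR Q hQ h => hX.2.1 hR hQ h
  obtain ⟨P, hPS, hsP⟩ := hs
  have hPX : P ∈ X := hSX hPS
  obtain ⟨Q, hQX, htQ⟩ := exists_block' hX t
  have hQS : Q ∉ S := fun h => ht ⟨Q, h, htQ⟩
  -- every (P₂,Q₂)-cut of G/X with p ∈ P₂, q ∈ Q₂ is a p,q-cut of G
  have cut_to_st : ∀ (p q : V) (P₂ Q₂ : Set V), P₂ ∈ X → Q₂ ∈ X → p ∈ P₂ → q ∈ Q₂ →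
      ∀ C', IsPartSTCut G X C' P₂ Q₂ → IsSTCut G C' p q := by
    rintro p q P₂ Q₂ hP₂ hQ₂ hp hq C' ⟨T, hT, hPT, hQT, rfl⟩
    exact ⟨⋃₀ T, ⟨P₂, hPT, hp⟩, not_mem_sUnion_of_disjoint hdisjX hT hQ₂ hQT hq, rfl⟩
  have hwC : lamST G w s t = cutWeight w C :=
    IsLeast.csInf_eq ⟨⟨C, hmin.1, rfl⟩, by rintro x ⟨C', hC', rfl⟩; exact hmin.2 C' hC'⟩
  have hCPQ : IsPartSTCut G X C P Q := ⟨S, hSX, hPS, hQS, hC⟩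
  have hlamPQ : lamPart G w X P Q = cutWeight w C := by
    refine IsLeast.csInf_eq ⟨⟨C, hCPQ, rfl⟩, ?_⟩
    rintro x ⟨C', hC', rfl⟩
    exact hmin.2 C' (cut_to_st s t P Q hPX hQX hsP htQ C' hC')
  have hlamMaxPQ : lamMax G w P Q = cutWeight w C := by
    refine IsGreatest.csSup_eq ⟨⟨s, hsP, t, htQ, hwC⟩, ?_⟩
    rintro x ⟨p, hp, q, hq, rfl⟩
    exact csInf_le (bddBelow_st hw p q) ⟨C, cut_to_st p q P Q hPX hQX hp hq C hCPQ, rfl⟩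
  have hPQne : P ≠ Q := fun h => hQS (h ▸ hPS)
  have hΛ : LambdaPair G w X P Q := ⟨hPX, hQX, hPQne, hlamPQ.trans hlamMaxPQ.symm⟩
  have hle : cutWeight w C ≤ lamPart G w X A B := hlamPQ ▸ hmax P Q hΛ
  have hminAB : IsPartSTCut G X C A B → IsMinPartSTCut G w X C A B := by
    intro hcut
    exact ⟨hcut, fun C' hC' => hle.trans (csInf_le (bddBelow_part hw X A B) ⟨C', hC', rfl⟩)⟩
  by_cases hAS : A ∈ S <;> by_cases hBS : B ∈ S
  · -- A ∈ S, B ∈ S : merge case, S' = insert (A∪B) (S \ {A,B})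
    right
    have hQnAB : Q ≠ A ∧ Q ≠ B := ⟨fun h => hQS (h ▸ hAS), fun h => hQS (h ▸ hBS)⟩
    have hUnion : ⋃₀ (insert (A ∪ B) (S \ {A, B})) = ⋃₀ S := by
      rw [Set.sUnion_insert]
      ext x
      simp only [Set.mem_union, Set.mem_sUnion]
      constructor
      · rintro ((hx | hx) | ⟨R, hR, hxR⟩)
        · exact ⟨A, hAS, hx⟩
        · exact ⟨B, hBS, hx⟩
        · exact ⟨R, hR.1, hxR⟩
      · rintro ⟨R, hR, hxR⟩
        by_cases h1 : R = A
        · exact Or.inl (Or.inl (h1 ▸ hxR))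
        by_cases h2 : R = B
        · exact Or.inl (Or.inr (h2 ▸ hxR))
        · exact Or.inr ⟨R, ⟨hR, by simp [h1, h2]⟩, hxR⟩
    have hS' : insert (A ∪ B) (S \ {A, B}) ⊆ insert (A ∪ B) (X \ {A, B}) :=
      Set.insert_subset_insert (Set.diff_subset_diff_left hSX)
    have hQ'S' : Q ∉ insert (A ∪ B) (S \ {A, B}) := by
      rintro (h | h)
      · obtain ⟨y, hy⟩ := hX.1 A hAX
        exact hQnAB.1 (block_eq' hX hQX hAX (h ▸ (Or.inl hy : y ∈ A ∪ B)) hy)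
      · exact hQS h.1
    have hQ'X : Q ∈ insert (A ∪ B) (X \ {A, B}) :=
      Or.inr ⟨hQX, by simp [hQnAB.1, hQnAB.2]⟩
    by_cases hP : P = A ∨ P = B
    · refine right_case hX hAX hBX hmin hS' (by rw [hUnion]; exact hC)
        (Set.mem_insert _ _) hQ'X (Set.mem_insert _ _) hQ'S' ?_ htQ
      rcases hP with rfl | rfl
      · exact Or.inl hsP
      · exact Or.inr hsP
    · push_neg at hP
      exact right_case hX hAX hBX hmin hS' (by rw [hUnion]; exact hC)
        (Or.inr ⟨hPX, by simp [hP.1, hP.2]⟩) hQ'X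
        (Or.inr ⟨hPS, by simp [hP.1, hP.2]⟩) hQ'S' hsP htQ
  · -- A ∈ S, B ∉ S
    exact Or.inl (hminAB ⟨S, hSX, hAS, hBS, hC⟩)
  · -- A ∉ S, B ∈ S : use complement
    refine Or.inl (hminAB ⟨X \ S, Set.diff_subset, ⟨hAX, hAS⟩, fun h => h.2 hBS, ?_⟩)
    rw [sUnion_diff' hX hSX, cutEdges_compl]
    exact hC
  · -- A ∉ S, B ∉ S : S' = S
    right
    have hPnAB : P ≠ A ∧ P ≠ B := ⟨fun h => hAS (h ▸ hPS), fun h => hBS (h ▸ hPS)⟩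
    have hS' : S ⊆ insert (A ∪ B) (X \ {A, B}) := by
      intro R hR
      exact Or.inr ⟨hSX hR, by
        simp only [Set.mem_insert_iff, Set.mem_singleton_iff, not_or]
        exact ⟨fun h => hAS (h ▸ hR), fun h => hBS (h ▸ hR)⟩⟩
    have hP'X : P ∈ insert (A ∪ B) (X \ {A, B}) :=
      Or.inr ⟨hPX, by simp [hPnAB.1, hPnAB.2]⟩
    by_cases hQ : Q = A ∨ Q = B
    · have hABS : A ∪ B ∉ S := fun h => union_not_mem' hX hAX hBX hABne (hSX h)
      refine right_case hX hAX hBX hmin hS' hC hP'X (Set.mem_insert _ _) hPS hABS hsP ?_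
      rcases hQ with rfl | rfl
      · exact Or.inl htQ
      · exact Or.inr htQ
    · push_neg at hQ
      exact right_case hX hAX hBX hmin hS' hC hP'X
        (Or.inr ⟨hQX, by simp [hQ.1, hQ.2]⟩) hPS hQS hsP htQ

/-- Let `(A,B) ∈ Λ(X)` maximize `λ(x_A,x_B;G/X)` over `Λ(X)`. Then every cut relevant both
for `G` and for `G/X` is either a minimum `x_A,x_B`-cut of `G/X` or a relevant cut of the
contraction obtained from `X` by merging `A` and `B`, and these two families are disjoint. -/
theorem stmt_11 (G : SimpleGraph V) (hconn : G.Connected)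
    (w : Sym2 V → ℝ) (hw : ∀ e ∈ G.edgeSet, 0 ≤ w e)
    (X : Set (Set V)) (hX : IsPartition X)
    (A B : Set V) (hAB : LambdaPair G w X A B)
    (hmax : ∀ A' B' : Set V, LambdaPair G w X A' B' →
      lamPart G w X A' B' ≤ lamPart G w X A B) :
    (∀ C : Set (Sym2 V), RelCut G w C → RelPartCut G w X C →
        IsMinPartSTCut G w X C A B ∨
          RelPartCut G w (insert (A ∪ B) (X \ {A, B})) C) ∧
      ∀ C : Set (Sym2 V), ¬ (IsMinPartSTCut G w X C A B ∧
        RelPartCut G w (insert (A ∪ B) (X \ {A, B})) C) := by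
  have hdisjX : ∀ R ∈ X, ∀ Q ∈ X, R ≠ Q → Disjoint R Q := fun R hR Q hQ h => hX.2.1 hR hQ h
  constructor
  · intro C hrel hrelX
    obtain ⟨s, t, hst, hmin⟩ := hrel
    obtain ⟨a, b, haX, hbX, hab, ⟨S, hSX, haS, hbS, hCS⟩, -⟩ := hrelX
    obtain ⟨W₁, hsW₁, htW₁, hCW₁⟩ := hmin.1
    have hpar := cut_parity (G := G) (W := W₁) (U := ⋃₀ S)
      (by rw [← hCW₁, ← hCS]) (hconn.preconnected s t)
    by_cases hs : s ∈ ⋃₀ S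
    · have ht : t ∉ ⋃₀ S := by tauto
      exact aux_core G w hw X hX A B hAB hmax C s t hmin S hSX hCS hs ht
    · have ht : t ∈ ⋃₀ S := by tauto
      exact aux_core G w hw X hX A B hAB hmax C t s (isMinSTCut_symm hmin) S hSX hCS ht hs
  · rintro C ⟨⟨⟨S, hSX, hAS, hBS, hCS⟩, -⟩, ⟨a, b, haX', hbX', hab', ⟨T, hTX', haT, hbT, hCT⟩, -⟩⟩
    obtain ⟨u, hu⟩ := hX.1 A hAB.1
    obtain ⟨v, hv⟩ := hX.1 B hAB.2.1
    have hpar := cut_parity (G := G) (W := ⋃₀ S) (U := ⋃₀ T)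
      (by rw [← hCS, ← hCT]) (hconn.preconnected u v)
    have huS : u ∈ ⋃₀ S := ⟨A, hAS, hu⟩
    have hvS : v ∉ ⋃₀ S := not_mem_sUnion_of_disjoint hdisjX hSX hAB.2.1 hBS hv
    have hdisj' := merge_disjoint hX hAB.1 hAB.2.1
    have hUV : u ∈ ⋃₀ T ↔ v ∈ ⋃₀ T := by
      by_cases hABT : A ∪ B ∈ T
      · exact ⟨fun _ => ⟨A ∪ B, hABT, Or.inr hv⟩, fun _ => ⟨A ∪ B, hABT, Or.inl hu⟩⟩
      · have h1 : u ∉ ⋃₀ T :=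
          not_mem_sUnion_of_disjoint hdisj' hTX' (Set.mem_insert _ _) hABT (Or.inl hu)
        have h2 : v ∉ ⋃₀ T :=
          not_mem_sUnion_of_disjoint hdisj' hTX' (Set.mem_insert _ _) hABT (Or.inr hv)
        simp [h1, h2]
    tauto
end

section
/- Let r ≥ 1, R = {e_1,…,e_r} ⊆ GF(2)^r the root basis, B ≠ R a basis, and let P = π(B) be the parent of B, so that P = (B \ {y}) ∪ {e_i} where y = min(B \ R) and e_i = min(R ∩ Ex_in(B; y)). Let υ be an element with υ ∈ Ex_in(P; e_i) and let z = Succ(υ). If (P \ {e_i}) ∪ {z} is not a basis, then: (i) z_j = 0 for all j ∈ {i+1,…,r}; and (ii) for every z' ∈ GF(2)^r with z'_p = z_p for all p ∈ {1,…,i}, the set (P \ {e_i}) ∪ {z'} is not a basis. -/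
/-- An element: a vector in `GF(2)^r`. -/
abbrev Elt (r : ℕ) := Fin r → ZMod 2

/-- A basis: a set of `r` linearly independent vectors of `GF(2)^r`. -/
def IsBasisSet {r : ℕ} (B : Finset (Elt r)) : Prop :=
  B.card = r ∧ LinearIndependent (ZMod 2) (Subtype.val : {x // x ∈ B} → Elt r)

/-- `bin(c) = (c_1 c_2 … c_r)₂`. -/
def binOf {r : ℕ} (c : Elt r) : ℕ := ∑ i : Fin r, (c i).val * 2 ^ (r - 1 - (i : ℕ))

/-- The `i`-th standard unit vector of `GF(2)^r`. -/
def stdVec (r : ℕ) (i : Fin r) : Elt r := fun j => if j = i then 1 else 0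

/-- The root basis `R = {e_1, …, e_r}` of standard unit vectors. -/
def rootB (r : ℕ) : Finset (Elt r) := Finset.univ.image (stdVec r)

/-- `Ex_in(B; x)`: the elements `y` such that `(x,y)` is an exchange for the basis `B`,
together with `x` itself. -/
def ExIn {r : ℕ} (B : Finset (Elt r)) (x : Elt r) : Set (Elt r) :=
  {y | y ∉ B ∧ IsBasisSet (insert y (B.erase x))} ∪ {x}

/-- The all-ones vector `𝟏`. -/
def allOnes (r : ℕ) : Elt r := fun _ => 1

/-- The all-zeros vector `𝟎`. -/
def allZeros (r : ℕ) : Elt r := fun _ => 0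

/-- `Succ(c)`: the element with `bin(Succ(c)) = bin(c) + 1` if `c ∉ {𝟏, 𝟎}`, and `𝟎`
otherwise. -/
def succElt {r : ℕ} (c : Elt r) : Elt r :=
  if c = allOnes r ∨ c = allZeros r then allZeros r
  else fun i => (((binOf c + 1) / 2 ^ (r - 1 - (i : ℕ))) % 2 : ℕ)

open Classical in
/-- The `≺`-minimum element of a set of elements (junk value if no minimum exists). -/
noncomputable def minElt {r : ℕ} (P : Set (Elt r)) : Elt r :=
  if h : ∃ c, c ∈ P ∧ ∀ d ∈ P, binOf c ≤ binOf d then h.choose else allZeros r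

/-- The parent `π(B) = (B \ {min(B \ R)}) ∪ {min(R ∩ Ex_in(B; min(B \ R)))}` of a basis
`B ≠ R`. -/
noncomputable def parentB {r : ℕ} (B : Finset (Elt r)) : Finset (Elt r) :=
  insert (minElt ((↑(rootB r) : Set (Elt r)) ∩ ExIn B (minElt ((↑B : Set (Elt r)) \ ↑(rootB r)))))
    (B.erase (minElt ((↑B : Set (Elt r)) \ ↑(rootB r))))

lemma sum_two_pow (n : ℕ) : ∑ t ∈ Finset.range n, 2^t = 2^n - 1 := by
  induction n with
  | zero => simp
  | succ n ih => rw [Finset.sum_range_succ, ih]; have : 1 ≤ 2^n := Nat.one_le_two_pow; omega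

lemma digit_lemma (n : ℕ) (w : ℕ → ℕ) (hw : ∀ t, w t < 2) (s : ℕ) (hs : s < n) :
    (∑ t ∈ Finset.range n, w t * 2^t) / 2^s % 2 = w s := by
  have hsplit : ∑ t ∈ Finset.range n, w t * 2^t
      = (∑ t ∈ Finset.range s, w t * 2^t) + w s * 2^s + ∑ t ∈ Finset.Ico (s+1) n, w t * 2^t := by
    rw [Finset.range_eq_Ico, ← Finset.sum_Ico_consecutive _ (Nat.zero_le (s+1)) hs,
      ← Finset.range_eq_Ico, Finset.sum_range_succ]
  have ha : (∑ t ∈ Finset.range s, w t * 2^t) < 2^s := by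
    calc (∑ t ∈ Finset.range s, w t * 2^t) ≤ ∑ t ∈ Finset.range s, 1 * 2^t := by
          apply Finset.sum_le_sum; intro t _; exact Nat.mul_le_mul_right _ (by have := hw t; omega)
      _ = 2^s - 1 := by simpa using sum_two_pow s
      _ < 2^s := by have : 1 ≤ 2^s := Nat.one_le_two_pow; omega
  have hb : ∑ t ∈ Finset.Ico (s+1) n, w t * 2^t
      = 2^(s+1) * ∑ t ∈ Finset.Ico (s+1) n, w t * 2^(t - (s+1)) := by
    rw [Finset.mul_sum]
    apply Finset.sum_congr rfl
    intro t ht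
    have hts : s + 1 ≤ t := (Finset.mem_Ico.mp ht).1
    rw [show 2^t = 2^(s+1) * 2^(t-(s+1)) by rw [← pow_add]; congr 1; omega]
    ring
  set b := ∑ t ∈ Finset.Ico (s+1) n, w t * 2^(t - (s+1)) with hbdef
  rw [hsplit, hb]
  have h2s : 0 < 2^s := Nat.pow_pos (by norm_num)
  have : ((∑ t ∈ Finset.range s, w t * 2^t) + w s * 2^s + 2^(s+1) * b) / 2^s = w s + 2 * b := by
    have heq : (∑ t ∈ Finset.range s, w t * 2^t) + w s * 2^s + 2^(s+1) * b
        = (∑ t ∈ Finset.range s, w t * 2^t) + 2^s * (w s + 2 * b) := by ring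
    rw [heq, Nat.add_mul_div_left _ _ h2s, Nat.div_eq_of_lt ha]; omega
  rw [this, Nat.add_mul_mod_self_left, Nat.mod_eq_of_lt (hw s)]

/-- digits-of-binOf, range form -/
noncomputable def wfun {r : ℕ} (c : Elt r) (t : ℕ) : ℕ :=
  if h : r - 1 - t < r then (c ⟨r - 1 - t, h⟩).val else 0

lemma wfun_lt {r : ℕ} (c : Elt r) (t : ℕ) : wfun c t < 2 := by
  unfold wfun; split
  · exact ZMod.val_lt _
  · norm_num

lemma binOf_eq_range {r : ℕ} (c : Elt r) :
    binOf c = ∑ t ∈ Finset.range r, wfun c t * 2^t := by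
  rw [← Finset.sum_range_reflect (fun t => wfun c t * 2^t) r]
  rw [binOf, ← Fin.sum_univ_eq_sum_range (fun t => wfun c (r-1-t) * 2^(r-1-t)) r]
  apply Finset.sum_congr rfl
  intro i _
  have hi : (i : ℕ) < r := i.isLt
  have h2 : r - 1 - (r-1-(i:ℕ)) < r := by omega
  have h3 : wfun c (r-1-(i:ℕ)) = (c i).val := by
    rw [wfun, dif_pos h2]
    congr 2
    exact Fin.ext (by simp; omega)
  rw [h3]

lemma digitOf {r : ℕ} (c : Elt r) (j : Fin r) :
    binOf c / 2 ^ (r - 1 - (j:ℕ)) % 2 = (c j).val := by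
  have hj : (j:ℕ) < r := j.isLt
  have hs : r - 1 - (j:ℕ) < r := by omega
  rw [binOf_eq_range, digit_lemma r (wfun c) (wfun_lt c) _ hs]
  rw [wfun, dif_pos (show r - 1 - (r-1-(j:ℕ)) < r by omega)]
  congr 2
  exact Fin.ext (by simp; omega)

lemma split_sum (n s : ℕ) (hs : s < n) (f : ℕ → ℕ) :
    ∑ t ∈ Finset.range n, f t
      = (∑ t ∈ Finset.range s, f t) + f s + ∑ t ∈ Finset.Ico (s+1) n, f t := by
  rw [Finset.range_eq_Ico, ← Finset.sum_Ico_consecutive _ (Nat.zero_le (s+1)) hs,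
    ← Finset.range_eq_Ico, Finset.sum_range_succ]

lemma zmod2_ne_one : ∀ x : ZMod 2, x ≠ 1 → x = 0 := by decide
lemma zmod2_ne_zero : ∀ x : ZMod 2, x ≠ 0 → x = 1 := by decide

lemma succ_struct {r : ℕ} (c : Elt r) (h1 : c ≠ allOnes r) (h0 : c ≠ allZeros r) :
    ∃ k : Fin r, c k = 0 ∧
      (∀ m : Fin r, succElt c m = if m < k then c m else if m = k then 1 else 0) := by
  have hne : (Finset.univ.filter (fun m => c m = 0)).Nonempty := by
    by_contra h
    apply h1
    funext m
    rw [Finset.not_nonempty_iff_eq_empty, Finset.filter_eq_empty_iff] at h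
    exact zmod2_ne_zero _ (h (Finset.mem_univ m))
  set k := (Finset.univ.filter (fun m => c m = 0)).max' hne with hk
  have hck : c k = 0 := (Finset.mem_filter.mp ((Finset.univ.filter (fun m => c m = 0)).max'_mem hne)).2
  have hmax : ∀ m : Fin r, k < m → c m = 1 := by
    intro m hm
    by_contra h
    have : m ∈ Finset.univ.filter (fun m => c m = 0) := by
      simp [zmod2_ne_one _ h]
    exact absurd (Finset.le_max' _ m this) (not_le.mpr hm)
  set d : Elt r := fun m => if m < k then c m else if m = k then 1 else 0 with hd
  refine ⟨k, hck, ?_⟩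
  have hkr : (k : ℕ) < r := k.isLt
  set s := r - 1 - (k : ℕ) with hs
  have hsr : s < r := by omega
  -- digit facts
  have hwc_lt : ∀ t, t < s → wfun c t = 1 := by
    intro t ht
    have h2 : r - 1 - t < r := by omega
    rw [wfun, dif_pos h2]
    have : k < (⟨r-1-t, h2⟩ : Fin r) := by rw [Fin.lt_def]; simp; omega
    rw [hmax _ this]; rfl
  have hwc_s : wfun c s = 0 := by
    rw [wfun, dif_pos (show r-1-s < r by omega)]
    have : (⟨r-1-s, show r-1-s<r by omega⟩ : Fin r) = k := Fin.ext (by simp; omega)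
    rw [this, hck]; rfl
  have hwd_lt : ∀ t, t < s → wfun d t = 0 := by
    intro t ht
    have h2 : r - 1 - t < r := by omega
    rw [wfun, dif_pos h2]
    have hgt : k < (⟨r-1-t, h2⟩ : Fin r) := by rw [Fin.lt_def]; simp; omega
    have : d ⟨r-1-t, h2⟩ = 0 := by
      rw [hd]; simp only
      rw [if_neg (by exact not_lt.mpr (le_of_lt hgt)), if_neg (by exact Fin.ne_of_gt hgt)]
    rw [this]; rfl
  have hwd_s : wfun d s = 1 := by
    rw [wfun, dif_pos (show r-1-s < r by omega)]
    have heqk : (⟨r-1-s, show r-1-s<r by omega⟩ : Fin r) = k := Fin.ext (by simp; omega)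
    rw [heqk, hd]; simp; decide
  have hwd_gt : ∀ t, s < t → t < r → wfun d t = wfun c t := by
    intro t ht htr
    have h2 : r - 1 - t < r := by omega
    rw [wfun, wfun, dif_pos h2, dif_pos h2]
    have hlt : (⟨r-1-t, h2⟩ : Fin r) < k := by rw [Fin.lt_def]; simp; omega
    have : d ⟨r-1-t, h2⟩ = c ⟨r-1-t, h2⟩ := by rw [hd]; simp only [if_pos hlt]
    rw [this]
  -- binOf d = binOf c + 1
  have hbin : binOf d = binOf c + 1 := by
    rw [binOf_eq_range, binOf_eq_range,
      split_sum r s hsr (fun t => wfun d t * 2^t),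
      split_sum r s hsr (fun t => wfun c t * 2^t)]
    have e1 : ∑ t ∈ Finset.range s, wfun d t * 2^t = 0 := by
      apply Finset.sum_eq_zero; intro t ht
      rw [hwd_lt t (Finset.mem_range.mp ht)]; ring
    have e2 : ∑ t ∈ Finset.range s, wfun c t * 2^t = 2^s - 1 := by
      rw [Finset.sum_congr rfl (fun t ht => by rw [hwc_lt t (Finset.mem_range.mp ht), one_mul])]
      exact sum_two_pow s
    have e3 : ∑ t ∈ Finset.Ico (s+1) r, wfun d t * 2^t
        = ∑ t ∈ Finset.Ico (s+1) r, wfun c t * 2^t := by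
      apply Finset.sum_congr rfl; intro t ht
      rw [hwd_gt t (Finset.mem_Ico.mp ht).1 (Finset.mem_Ico.mp ht).2]
    rw [e1, e2, e3, hwd_s, hwc_s]
    have : 1 ≤ 2^s := Nat.one_le_two_pow
    omega
  -- conclude
  intro m
  have hnc : ¬ (c = allOnes r ∨ c = allZeros r) := by tauto
  have hstep : succElt c m = (((binOf c + 1) / 2 ^ (r - 1 - (m : ℕ))) % 2 : ℕ) := by
    rw [succElt, if_neg hnc]
  rw [hstep, ← hbin, digitOf d m, ZMod.natCast_val, ZMod.cast_id]


lemma indep_coe {r} (F : Finset (Elt r)) :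
    LinearIndependent (ZMod 2) (Subtype.val : {x // x ∈ F} → Elt r) ↔
    LinearIndependent (ZMod 2) (fun b : ↥(↑F : Set (Elt r)) => (b : Elt r)) := Iff.rfl

lemma minElt_spec {r : ℕ} (P : Set (Elt r)) (hne : P.Nonempty) :
    minElt P ∈ P ∧ ∀ d ∈ P, binOf (minElt P) ≤ binOf d := by
  have h : ∃ c, c ∈ P ∧ ∀ d ∈ P, binOf c ≤ binOf d := by
    obtain ⟨a, ha, hmin⟩ := Set.exists_min_image P binOf (Set.toFinite P) hne
    exact ⟨a, ha, hmin⟩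
  rw [minElt, dif_pos h]
  exact h.choose_spec

lemma isBasisSet_insert_iff {r : ℕ} (hr : 1 ≤ r) (S : Finset (Elt r)) (hcard : S.card = r - 1)
    (hind : LinearIndependent (ZMod 2) (Subtype.val : {x // x ∈ S} → Elt r)) (w : Elt r) :
    IsBasisSet (insert w S) ↔ w ∉ Submodule.span (ZMod 2) (↑S : Set (Elt r)) := by
  haveI : Fact (Nat.Prime 2) := ⟨Nat.prime_two⟩
  constructor
  · rintro ⟨hc, hi⟩
    have hwS : w ∉ S := by
      intro hw; rw [Finset.insert_eq_self.mpr hw] at hc; omega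
    have hwS' : w ∉ (↑S : Set (Elt r)) := hwS
    have hi' : LinearIndependent (ZMod 2)
        (fun b : ↥(↑(insert w S) : Set (Elt r)) => (b : Elt r)) := (indep_coe _).mp hi
    rw [Finset.coe_insert] at hi'
    exact ((linearIndepOn_id_insert hwS').mp hi').2
  · intro hw
    have hwS : w ∉ S := fun hmem => hw (Submodule.subset_span hmem)
    have hwS' : w ∉ (↑S : Set (Elt r)) := hwS
    refine ⟨?_, ?_⟩
    · rw [Finset.card_insert_of_notMem hwS, hcard]; omega
    · rw [indep_coe, show ((↑(insert w S) : Set (Elt r))) = insert w ↑S from Finset.coe_insert w S]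
      exact (linearIndepOn_id_insert hwS').mpr ⟨(indep_coe _).mp hind, hw⟩

lemma not_mem_span_erase {r : ℕ} (B : Finset (Elt r)) (hB : IsBasisSet B) {x : Elt r}
    (hx : x ∈ B) : x ∉ Submodule.span (ZMod 2) (↑(B.erase x) : Set (Elt r)) := by
  haveI : Fact (Nat.Prime 2) := ⟨Nat.prime_two⟩
  have hxe : x ∉ (↑(B.erase x) : Set (Elt r)) := by simp
  have hi' : LinearIndependent (ZMod 2)
      (fun b : ↥(↑B : Set (Elt r)) => (b : Elt r)) := (indep_coe _).mp hB.2
  have hBe : (↑B : Set (Elt r)) = insert x ↑(B.erase x) := by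
    rw [← Finset.coe_insert, Finset.insert_erase hx]
  rw [hBe] at hi'
  exact ((linearIndepOn_id_insert hxe).mp hi').2

lemma eq_sum_stdVec {r : ℕ} (v : Elt r) : v = ∑ j : Fin r, v j • stdVec r j := by
  funext m
  rw [Finset.sum_apply]
  simp only [Pi.smul_apply, stdVec, smul_eq_mul, mul_ite, mul_one, mul_zero]
  rw [Finset.sum_ite_eq Finset.univ m v]
  simp

lemma binOf_stdVec (r : ℕ) (i : Fin r) : binOf (stdVec r i) = 2 ^ (r - 1 - (i : ℕ)) := by
  rw [binOf, Finset.sum_eq_single i]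
  · simp [stdVec, ZMod.val_one]
  · intro j _ hj
    simp [stdVec, if_neg hj]
  · intro h; exact absurd (Finset.mem_univ i) h

/-- Let `B ≠ R` be a basis with parent `P = π(B) = (B \ {y}) ∪ {e_i}`, where
`y = min(B \ R)` and `e_i = min(R ∩ Ex_in(B; y))`. Let `υ ∈ Ex_in(P; e_i)` and
`z = Succ(υ)`. If `(P \ {e_i}) ∪ {z}` is not a basis, then (i) `z_j = 0` for every
`j > i`, and (ii) for every `z'` agreeing with `z` on the coordinates `p ≤ i`,
`(P \ {e_i}) ∪ {z'}` is not a basis. -/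
theorem stmt_15 (r : ℕ) (hr : 1 ≤ r) (B : Finset (Elt r))
    (hB : IsBasisSet B) (hne : B ≠ rootB r)
    (y : Elt r) (hy : y = minElt ((↑B : Set (Elt r)) \ ↑(rootB r)))
    (i : Fin r) (hi : stdVec r i = minElt ((↑(rootB r) : Set (Elt r)) ∩ ExIn B y))
    (P : Finset (Elt r)) (hP : P = parentB B)
    (hPform : P = insert (stdVec r i) (B.erase y))
    (υ : Elt r) (hυ : υ ∈ ExIn P (stdVec r i))
    (z : Elt r) (hz : z = succElt υ)
    (hnb : ¬ IsBasisSet (insert z (P.erase (stdVec r i)))) :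
    (∀ j : Fin r, i < j → z j = 0) ∧
      ∀ z' : Elt r, (∀ p : Fin r, p ≤ i → z' p = z p) →
        ¬ IsBasisSet (insert z' (P.erase (stdVec r i))) := by

  haveI : Fact (Nat.Prime 2) := ⟨Nat.prime_two⟩
  have h2self : ∀ a : ZMod 2, a + a = 0 := fun a => CharTwo.add_self_eq_zero a
  -- root basis cardinality
  have hstdinj : Function.Injective (stdVec r) := by
    intro a b hab
    by_contra hne'
    have h1 := congrFun hab a
    simp only [stdVec, if_pos rfl] at h1
    rw [if_neg hne'] at h1
    exact one_ne_zero h1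
  have hcardR : (rootB r).card = r := by
    rw [rootB, Finset.card_image_of_injective _ hstdinj, Finset.card_univ, Fintype.card_fin]
  -- y
  have hBR : ((↑B : Set (Elt r)) \ ↑(rootB r)).Nonempty := by
    rw [Set.diff_nonempty]
    intro hsub
    exact hne (Finset.eq_of_subset_of_card_le (Finset.coe_subset.mp hsub)
      (by rw [hB.1, hcardR]))
  obtain ⟨hymem, hymin⟩ := minElt_spec _ hBR
  rw [← hy] at hymem hymin
  have hyB : y ∈ B := hymem.1
  have hyR : y ∉ rootB r := fun h => hymem.2 (Finset.mem_coe.mpr h)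
  -- erase y
  have hScard : (B.erase y).card = r - 1 := by rw [Finset.card_erase_of_mem hyB, hB.1]
  have hSind : LinearIndependent (ZMod 2) (Subtype.val : {x // x ∈ B.erase y} → Elt r) := by
    rw [indep_coe]
    exact LinearIndepOn.mono (v := id) ((indep_coe B).mp hB.2) (by simp [Finset.erase_subset])
  have basis_iff : ∀ w : Elt r, IsBasisSet (insert w (B.erase y)) ↔
      w ∉ Submodule.span (ZMod 2) (↑(B.erase y) : Set (Elt r)) :=
    isBasisSet_insert_iff hr (B.erase y) hScard hSind
  set H := Submodule.span (ZMod 2) (↑(B.erase y) : Set (Elt r)) with hH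
  have hynot : y ∉ H := not_mem_span_erase B hB hyB
  -- T nonempty
  have hTne : ((↑(rootB r) : Set (Elt r)) ∩ ExIn B y).Nonempty := by
    have hex : ∃ j : Fin r, stdVec r j ∉ H := by
      by_contra hall
      push_neg at hall
      apply hynot
      have hsum : ∑ j : Fin r, y j • stdVec r j ∈ H :=
        Submodule.sum_mem _ (fun j _ => Submodule.smul_mem _ _ (hall j))
      rw [eq_sum_stdVec y]
      exact hsum
    obtain ⟨j, hj⟩ := hex
    have hjroot : stdVec r j ∈ rootB r := Finset.mem_image_of_mem _ (Finset.mem_univ j)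
    have hjy : stdVec r j ≠ y := fun h => hyR (h ▸ hjroot)
    have hjB : stdVec r j ∉ B := by
      intro hmem
      exact hj (Submodule.subset_span (Finset.mem_coe.mpr (Finset.mem_erase.mpr ⟨hjy, hmem⟩)))
    refine ⟨stdVec r j, Finset.mem_coe.mpr hjroot, ?_⟩
    exact Or.inl ⟨hjB, (basis_iff _).mpr hj⟩
  obtain ⟨hiT, himin⟩ := minElt_spec _ hTne
  rw [← hi] at hiT himin
  -- e_i facts
  have hiy : stdVec r i ≠ y := fun h => hyR (h ▸ Finset.mem_image_of_mem _ (Finset.mem_univ i))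
  have hiEx := hiT.2
  have hiB : stdVec r i ∉ B ∧ IsBasisSet (insert (stdVec r i) (B.erase y)) := by
    rcases hiEx with h | h
    · exact h
    · exact absurd h hiy
  have einot : stdVec r i ∉ H := (basis_iff _).mp hiB.2
  -- S = B.erase y
  have hse : P.erase (stdVec r i) = B.erase y := by
    rw [hPform, Finset.erase_insert]
    intro hmem
    exact hiB.1 (Finset.mem_of_mem_erase hmem)
  rw [hse] at hnb
  -- z in H
  have hzH : z ∈ H := by
    by_contra hzn
    exact hnb ((basis_iff z).mpr hzn)
  -- υ not in H
  have hυH : υ ∉ H := by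
    rcases hυ with h | h
    · have hb2 := h.2
      rw [hse] at hb2
      exact (basis_iff υ).mp hb2
    · rw [Set.mem_singleton_iff] at h
      rw [h]
      exact einot
  -- e_j ∈ H for j > i
  have ejH : ∀ j : Fin r, i < j → stdVec r j ∈ H := by
    intro j hij
    have hbinlt : binOf (stdVec r j) < binOf (stdVec r i) := by
      rw [binOf_stdVec, binOf_stdVec]
      exact Nat.pow_lt_pow_right (by norm_num)
        (by have h1 : (i:ℕ) < (j:ℕ) := hij; have := j.isLt; omega)
    have hjroot : stdVec r j ∈ rootB r := Finset.mem_image_of_mem _ (Finset.mem_univ j)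
    have hjT : stdVec r j ∉ (↑(rootB r) : Set (Elt r)) ∩ ExIn B y := by
      intro hmem
      exact absurd (himin _ hmem) (not_le.mpr hbinlt)
    have hjEx : stdVec r j ∉ ExIn B y := fun h => hjT ⟨Finset.mem_coe.mpr hjroot, h⟩
    by_cases hjB : stdVec r j ∈ B
    · have hjy : stdVec r j ≠ y := fun h => hyR (h ▸ hjroot)
      exact Submodule.subset_span (Finset.mem_coe.mpr (Finset.mem_erase.mpr ⟨hjy, hjB⟩))
    · by_contra hnm
      exact hjEx (Or.inl ⟨hjB, (basis_iff _).mpr hnm⟩)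
  -- vectors supported above i are in H
  have hsupp : ∀ w : Elt r, (∀ p : Fin r, p ≤ i → w p = 0) → w ∈ H := by
    intro w hw
    have hsum : ∑ j : Fin r, w j • stdVec r j ∈ H := by
      apply Submodule.sum_mem
      intro j _
      by_cases hji : j ≤ i
      · rw [hw j hji, zero_smul]; exact Submodule.zero_mem _
      · exact Submodule.smul_mem _ _ (ejH j (not_le.mp hji))
    rw [eq_sum_stdVec w]
    exact hsum
  constructor
  · -- part (i)
    by_cases hcase : υ = allOnes r ∨ υ = allZeros r
    · intro j _
      rw [hz, succElt, if_pos hcase]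
      rfl
    · push_neg at hcase
      obtain ⟨k, hck, hform⟩ := succ_struct υ hcase.1 hcase.2
      by_cases hki : k ≤ i
      · intro j hij
        have hjk : k < j := lt_of_le_of_lt hki hij
        rw [hz, hform j, if_neg (not_lt.mpr (le_of_lt hjk)), if_neg (Fin.ne_of_gt hjk)]
      · exfalso
        push_neg at hki
        apply hυH
        have hw : ∀ p : Fin r, p ≤ i → (υ + z) p = 0 := by
          intro p hpi
          have hpk : p < k := lt_of_le_of_lt hpi hki
          have hzp : z p = υ p := by rw [hz, hform p, if_pos hpk]
          show υ p + z p = 0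
          rw [hzp]
          exact h2self _
        have hmem := hsupp (υ + z) hw
        have hdecomp : υ = z + (υ + z) := by
          funext p
          show υ p = z p + (υ p + z p)
          calc υ p = υ p + (z p + z p) := by rw [h2self, add_zero]
            _ = z p + (υ p + z p) := by ring
        rw [hdecomp]
        exact Submodule.add_mem _ hzH hmem
  · -- part (ii)
    intro z' hz'
    rw [hse]
    intro hb
    have hw : ∀ p : Fin r, p ≤ i → (z' + z) p = 0 := by
      intro p hpi
      show z' p + z p = 0
      rw [hz' p hpi]
      exact h2self _
    have hmem := hsupp (z' + z) hw
    have hdecomp : z' = z + (z' + z) := by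
      funext p
      show z' p = z p + (z' p + z p)
      calc z' p = z' p + (z p + z p) := by rw [h2self, add_zero]
        _ = z p + (z' p + z p) := by ring
    have hz'H : z' ∈ H := by rw [hdecomp]; exact Submodule.add_mem _ hzH hmem
    exact (basis_iff z').mp hb hz'H
end
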